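/- arXiv:1806.03756 — 3 statements merged into one kernel-verified Lean document; each statement's English description precedes it below -/
import Mathlib

section
/- Let h(t) = -(k/p)·t + (1/p)·Σ_{i=1}^p max(|β_i| + t, 0) for fixed β ∈ ℝ^p and integers 1 ≤ k < p. Then the infimum of h over t ∈ ℝ is attained, and the constraint inf_t h(t) ≤ 0 holds if and only if β = 0 and the infimum is attained at t = 0. -/
/-!
Up to the factor `1/p`, `h t = ∑ i, max (|β i| + t) 0 - k t` is piecewise linear with slope `-k < 0`
for `t ≤ -max |β i|` and slope `p - k > 0` for `t ≥ 0`, so it is coercive and attains its infimum.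
Bounding the hinge sum below by `0` and by `∑ i, |β i| + p t` gives `h t ≥ -(k/p) t` and
`h t ≥ (1 - k/p) t + (1/p) ∑ i, |β i|`; together these show `h ≥ 0`, with `h > 0` everywhere
as soon as `β ≠ 0`. Hence `inf h ≤ 0` forces `β = 0`, and then `h 0 = 0` is the minimum.
-/

open Finset Filter

noncomputable def hingeLoss (p : ℕ) (k : ℝ) (β : Fin p → ℝ) (t : ℝ) : ℝ :=
  -(k / p) * t + (1 / p) * ∑ i, max (|β i| + t) 0

namespace hingeLoss

variable {p : ℕ} {k : ℝ} (β : Fin p → ℝ)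

theorem continuous : Continuous (hingeLoss p k β) := by
  unfold hingeLoss
  fun_prop

theorem neg_mul_le (t : ℝ) : -(k / p) * t ≤ hingeLoss p k β t := by
  have hsum : 0 ≤ ∑ i, max (|β i| + t) 0 := sum_nonneg fun i _ => le_max_right _ _
  unfold hingeLoss
  nlinarith [show (0 : ℝ) ≤ 1 / p by positivity]

theorem linear_le (hp : 0 < p) (t : ℝ) :
    (1 - k / p) * t + (1 / p) * ∑ i, |β i| ≤ hingeLoss p k β t := by
  have hsum : ∑ i, |β i| + p * t ≤ ∑ i, max (|β i| + t) 0 := by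
    calc ∑ i, |β i| + p * t = ∑ i, (|β i| + t) := by simp [sum_add_distrib]
      _ ≤ _ := sum_le_sum fun i _ => le_max_left _ _
  calc (1 - k / p) * t + (1 / p) * ∑ i, |β i|
      = -(k / p) * t + (1 / p) * (∑ i, |β i| + p * t) := by field_simp; ring
    _ ≤ hingeLoss p k β t := by unfold hingeLoss; gcongr

variable {β}

theorem nonneg (hk : 0 < k) (hkp : k < p) (t : ℝ) : 0 ≤ hingeLoss p k β t := by
  have hp : (0 : ℝ) < p := hk.trans hkp
  have hkp' : 0 < 1 - k / p := sub_pos.2 ((div_lt_one hp).2 hkp)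
  rcases le_or_gt 0 t with ht | ht
  · have : 0 ≤ (1 / p) * ∑ i, |β i| := by positivity
    nlinarith [linear_le (k := k) β (by exact_mod_cast hp) t]
  · nlinarith [neg_mul_le β (k := k) t, div_pos hk hp]

theorem pos (hk : 0 < k) (hkp : k < p) (hβ : β ≠ 0) (t : ℝ) : 0 < hingeLoss p k β t := by
  have hp : (0 : ℝ) < p := hk.trans hkp
  have hkp' : 0 < 1 - k / p := sub_pos.2 ((div_lt_one hp).2 hkp)
  rcases le_or_gt 0 t with ht | ht
  · obtain ⟨j, hj⟩ := Function.ne_iff.mp hβ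
    have : 0 < ∑ i, |β i| :=
      sum_pos' (fun i _ => abs_nonneg _) ⟨j, mem_univ j, abs_pos.mpr hj⟩
    have : 0 < (1 / p) * ∑ i, |β i| := by positivity
    nlinarith [linear_le (k := k) β (by exact_mod_cast hp) t]
  · nlinarith [neg_mul_le β (k := k) t, div_pos hk hp]

theorem zero_zero : hingeLoss p k 0 0 = 0 := by
  simp [hingeLoss]

theorem tendsto_atTop (hk : 0 < k) (hkp : k < p) : Tendsto (hingeLoss p k β) atTop atTop := by
  have hp : (0 : ℝ) < p := hk.trans hkp
  have hkp' : 0 < 1 - k / p := sub_pos.2 ((div_lt_one hp).2 hkp)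
  refine tendsto_atTop_mono (linear_le (k := k) β (by exact_mod_cast hp)) ?_
  exact tendsto_atTop_add_const_right _ _ (tendsto_id.const_mul_atTop hkp')

theorem tendsto_atBot (hk : 0 < k) (hkp : k < p) : Tendsto (hingeLoss p k β) atBot atTop := by
  have hp : (0 : ℝ) < p := hk.trans hkp
  refine tendsto_atTop_mono (neg_mul_le (k := k) β) ?_
  exact tendsto_id.const_mul_atBot_of_neg (neg_lt_zero.mpr (div_pos hk hp))

theorem exists_forall_le (hk : 0 < k) (hkp : k < p) :
    ∃ t₀, ∀ t, hingeLoss p k β t₀ ≤ hingeLoss p k β t :=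
  (continuous β).exists_forall_le <| by
    rw [cocompact_eq_atBot_atTop]
    exact (tendsto_atBot hk hkp).sup (tendsto_atTop hk hkp)

end hingeLoss

/-- For `h t = -(k/p)·t + (1/p)·∑ i, max (|β i| + t) 0` with `1 ≤ k < p`,
the infimum of `h` over `ℝ` is attained, and `inf h ≤ 0` holds iff `β = 0`
and the infimum is attained at `t = 0`. -/
theorem stmt0 (p k : ℕ) (hk : 1 ≤ k) (hkp : k < p) (β : Fin p → ℝ) :
    let h : ℝ → ℝ := fun t => -((k : ℝ) / p) * t + (1 / p) * ∑ i, max (|β i| + t) 0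
    (∃ t₀ : ℝ, ∀ t : ℝ, h t₀ ≤ h t) ∧
      (sInf (Set.range h) ≤ 0 ↔ β = 0 ∧ ∀ t : ℝ, h 0 ≤ h t) := by
  intro h
  have hk : (0 : ℝ) < k := by exact_mod_cast hk
  have hkp : (k : ℝ) < p := by exact_mod_cast hkp
  obtain ⟨t₀, ht₀⟩ := hingeLoss.exists_forall_le (β := β) hk hkp
  have hInf : sInf (Set.range h) = h t₀ := IsLeast.csInf_eq ⟨⟨t₀, rfl⟩, Set.forall_mem_range.2 ht₀⟩
  refine ⟨⟨t₀, ht₀⟩, fun hle => ?_, fun ⟨hβ, _⟩ => ?_⟩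
  · obtain rfl : β = 0 := by
      by_contra hβ
      exact (hingeLoss.pos hk hkp hβ t₀).not_ge (hInf.symm.trans_le hle)
    exact ⟨rfl, fun t => hingeLoss.zero_zero.trans_le (hingeLoss.nonneg hk hkp t)⟩
  · subst hβ
    exact hInf.le.trans ((ht₀ 0).trans hingeLoss.zero_zero.le)
end

section
/- Let ρ = (σ_min(XᵀX) + nλ)/n. If β ∈ ℝ^p satisfies (1/n)‖y − Xβ‖² + λ‖β‖² ≤ v^U, then for each i, |β_i| ≤ max{(1/(nρ))xᵢᵀy + √((1/(n²ρ²))‖Xᵀy‖² + v^U/ρ − (1/(nρ))‖y‖²), −(1/(nρ))xᵢᵀy + √((1/(n²ρ²))‖Xᵀy‖² + v^U/ρ − (1/(nρ))‖y‖²)}. -/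
open Finset Matrix

/-- Big-M bound (Proposition 1): if `β` satisfies
`(1/n)‖y − Xβ‖² + λ‖β‖² ≤ v^U`, then with `ρ = (σ_min(XᵀX) + nλ)/n`
(where `σ` satisfies the smallest-eigenvalue lower bound `XᵀX ⪰ σ I`),
each `|β i|` is bounded by the stated closed-form expression. -/
theorem stmt5 (n p : ℕ) (hn : 1 ≤ n) (X : Matrix (Fin n) (Fin p) ℝ)
    (y : Fin n → ℝ) (lam : ℝ) (hlam : 0 < lam) (vU : ℝ) (σ : ℝ) (hσ0 : 0 ≤ σ)
    (hσ : ∀ v : Fin p → ℝ, σ * ∑ i, v i ^ 2 ≤ v ⬝ᵥ ((Xᵀ * X) *ᵥ v))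
    (ρ : ℝ) (hρ : ρ = (σ + n * lam) / n)
    (β : Fin p → ℝ)
    (hfeas : (1 / n) * ∑ j, (y j - (X *ᵥ β) j) ^ 2 + lam * ∑ i, β i ^ 2 ≤ vU) :
    ∀ i, |β i| ≤
      max
        ((1 / (n * ρ)) * ∑ j, X j i * y j +
          Real.sqrt ((1 / (n ^ 2 * ρ ^ 2)) * ∑ i', (∑ j, X j i' * y j) ^ 2 +
            vU / ρ - (1 / (n * ρ)) * ∑ j, y j ^ 2))
        (-((1 / (n * ρ)) * ∑ j, X j i * y j) +
          Real.sqrt ((1 / (n ^ 2 * ρ ^ 2)) * ∑ i', (∑ j, X j i' * y j) ^ 2 +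
            vU / ρ - (1 / (n * ρ)) * ∑ j, y j ^ 2)) := by
  intro i
  have hn' : (0:ℝ) < n := by exact_mod_cast hn
  have hρ0 : 0 < ρ := by
    rw [hρ]
    apply div_pos _ hn'
    have : (0:ℝ) < (n:ℝ) * lam := by positivity
    linarith
  have hnρ : (0:ℝ) < (n:ℝ) * ρ := by positivity
  -- abbreviations
  set a : Fin p → ℝ := fun i' => ∑ j, X j i' * y j with ha
  have hS : ∀ i', a i' = ∑ j, X j i' * y j := fun _ => rfl
  -- swap sums
  have hswap : ∑ j, y j * (X *ᵥ β) j = ∑ i', β i' * a i' := by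
    simp_rw [Matrix.mulVec, dotProduct, Finset.mul_sum, ha]
    rw [Finset.sum_comm]
    refine Finset.sum_congr rfl fun i' _ => ?_
    rw [Finset.mul_sum]
    exact Finset.sum_congr rfl fun j _ => by ring
  -- residual expansion
  have hres : ∑ j, (y j - (X *ᵥ β) j) ^ 2
      = (∑ j, y j ^ 2) - 2 * (∑ i', β i' * a i') + ∑ j, ((X *ᵥ β) j) ^ 2 := by
    rw [← hswap, Finset.mul_sum, ← Finset.sum_sub_distrib, ← Finset.sum_add_distrib]
    exact Finset.sum_congr rfl fun j _ => by ring
  -- eigenvalue bound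
  have hQ : σ * ∑ i', β i' ^ 2 ≤ ∑ j, ((X *ᵥ β) j) ^ 2 := by
    have h := hσ β
    have hdot : β ⬝ᵥ ((Xᵀ * X) *ᵥ β) = ∑ j, ((X *ᵥ β) j) ^ 2 := by
      rw [← Matrix.mulVec_mulVec, Matrix.dotProduct_mulVec, Matrix.vecMul_transpose]
      simp [dotProduct, sq]
    rwa [hdot] at h
  -- key linear inequality
  have key : (n:ℝ) * ρ * (∑ i', β i' ^ 2) - 2 * (∑ i', β i' * a i')
      ≤ (n:ℝ) * vU - ∑ j, y j ^ 2 := by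
    have hnρeq : (n:ℝ) * ρ = σ + n * lam := by
      rw [hρ]; field_simp
    have hfeas' : (∑ j, y j ^ 2) - 2 * (∑ i', β i' * a i') + (∑ j, ((X *ᵥ β) j) ^ 2)
        + (n:ℝ) * (lam * ∑ i', β i' ^ 2) ≤ (n:ℝ) * vU := by
      have := mul_le_mul_of_nonneg_left hfeas (le_of_lt hn')
      rw [mul_add, ← mul_assoc, mul_one_div, div_self (ne_of_gt hn'), one_mul, hres] at this
      linarith
    have hdistr : (n:ℝ) * ρ * (∑ i', β i' ^ 2)
        = σ * (∑ i', β i' ^ 2) + (n:ℝ) * (lam * ∑ i', β i' ^ 2) := by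
      rw [hnρeq]; ring
    linarith [hQ, hfeas', hdistr]
  -- the sum-of-squares bound
  have main : ∑ i', (β i' - (1 / (n * ρ)) * a i') ^ 2
      ≤ (1 / (n ^ 2 * ρ ^ 2)) * (∑ i', a i' ^ 2) + vU / ρ - (1 / (n * ρ)) * ∑ j, y j ^ 2 := by
    have expand : ∑ i', (β i' - (1 / (n * ρ)) * a i') ^ 2
        = (∑ i', β i' ^ 2) - (2 / (n * ρ)) * (∑ i', β i' * a i')
          + (1 / (n * ρ))^2 * (∑ i', a i' ^ 2) := by
      rw [Finset.mul_sum, Finset.mul_sum, ← Finset.sum_sub_distrib, ← Finset.sum_add_distrib]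
      exact Finset.sum_congr rfl fun i' _ => by ring
    rw [expand]
    have h1 : (∑ i', β i' ^ 2) - (2 / (n * ρ)) * (∑ i', β i' * a i')
        ≤ vU / ρ - (1 / (n * ρ)) * ∑ j, y j ^ 2 := by
      have h2 := (div_le_div_iff_of_pos_right hnρ).mpr key
      have hL : ((n:ℝ) * ρ * (∑ i', β i' ^ 2) - 2 * (∑ i', β i' * a i')) / ((n:ℝ) * ρ)
          = (∑ i', β i' ^ 2) - (2 / (n * ρ)) * (∑ i', β i' * a i') := by
        field_simp
      have hR : ((n:ℝ) * vU - ∑ j, y j ^ 2) / ((n:ℝ) * ρ)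
          = vU / ρ - (1 / (n * ρ)) * ∑ j, y j ^ 2 := by
        field_simp
      rw [hL, hR] at h2
      exact h2
    have h3 : (1 / ((n:ℝ) * ρ))^2 * (∑ i', a i' ^ 2)
        = (1 / (n ^ 2 * ρ ^ 2)) * (∑ i', a i' ^ 2) := by ring
    linarith [h3.le, h3.ge]
  -- per-coordinate
  have hterm : (β i - (1 / (n * ρ)) * a i) ^ 2
      ≤ (1 / (n ^ 2 * ρ ^ 2)) * (∑ i', a i' ^ 2) + vU / ρ - (1 / (n * ρ)) * ∑ j, y j ^ 2 :=
    le_trans (Finset.single_le_sum (f := fun i' => (β i' - (1 / (n * ρ)) * a i') ^ 2)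
      (fun i' _ => sq_nonneg _) (Finset.mem_univ i)) main
  have habs : |β i - (1 / (n * ρ)) * a i|
      ≤ Real.sqrt ((1 / (n ^ 2 * ρ ^ 2)) * (∑ i', a i' ^ 2) + vU / ρ
          - (1 / (n * ρ)) * ∑ j, y j ^ 2) := by
    have := Real.sqrt_le_sqrt hterm
    rwa [Real.sqrt_sq_eq_abs] at this
  have hb := abs_le.mp habs
  set s := Real.sqrt ((1 / (n ^ 2 * ρ ^ 2)) * (∑ i', a i' ^ 2) + vU / ρ
      - (1 / (n * ρ)) * ∑ j, y j ^ 2) with hs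
  have h1 : β i ≤ (1 / (n * ρ)) * a i + s := by cases hb; linarith
  have h2 : -β i ≤ -((1 / (n * ρ)) * a i) + s := by cases hb; linarith
  rcases abs_cases (β i) with ⟨heq, _⟩ | ⟨heq, _⟩ <;> rw [heq]
  · exact le_trans h1 (le_max_left _ _)
  · exact le_trans h2 (le_max_right _ _)
end

section
/- Suppose p ≥ k ≥ 1, λ > 0, and let v^G be the objective value of the greedy forward-selection algorithm for sparse ridge regression (which at each of k iterations adds the feature j minimizing −λ(yᵀA_S⁻¹x_j)²/(1 + x_jᵀA_S⁻¹x_j), starting from A_∅ = nλI). Then v* ≤ v^G ≤ ((nλ + θ_k)/(nλ))·(1 − (n²λ²·θ̲)/((nλ + θ₁)(nλ + θ_k)²)·log((p+1)/(p+1−k)))·v*, where v* is the optimal value, θ_s = max_{|S|=s} σ_max(X_S X_Sᵀ), and θ̲ = min_{|T| ≥ p−k+1} σ_min(X_T X_Tᵀ). -/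
/-!
By Sherman–Morrison, adding feature `j` to `S` lowers `f(S) = λ yᵀA_S⁻¹y` by the gain
`g_S(j) = λ (yᵀA_S⁻¹x_j)² / (1 + x_jᵀA_S⁻¹x_j)`, and the greedy gain is at least the average
gain over the `p - |S|` unused features. From `nλ I ⪯ A_S` and `‖x_j‖² ≤ θ₁` each gain is at
least `nλ/(nλ + θ₁) · λ (x_jᵀw)²` with `w = A_S⁻¹y`. Over the at least `p - k + 1` unused
features, `∑ λ (x_jᵀw)² ≥ λ θ̲ ‖w‖²`, while `A_S ⪯ (nλ + θ_k) I` gives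
`v* ≤ f(S) = λ wᵀA_S w ≤ λ (nλ + θ_k) ‖w‖²`. So step `t` lowers `f` by at least `c v* / (p - t)`
with `c = nλ θ̲ / ((nλ + θ₁)(nλ + θ_k))`.
Telescoping against `∑_{t<k} 1/(p - t) ≥ log((p + 1)/(p + 1 - k))` and using
`f(∅) = ‖y‖²/n ≤ (nλ + θ_k)/(nλ) · v*` gives the bound.
-/

open Finset Matrix

/-- `A_S = nλ I_n + ∑_{i ∈ S} x_i x_iᵀ`. -/
noncomputable def ridgeMat (n p : ℕ) (lam : ℝ) (x : Fin p → Fin n → ℝ)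
    (S : Finset (Fin p)) : Matrix (Fin n) (Fin n) ℝ :=
  ((n : ℝ) * lam) • (1 : Matrix (Fin n) (Fin n) ℝ) +
    ∑ i ∈ S, vecMulVec (x i) (x i)

/-- `θ_s = max_{|S| = s} σ_max(X_S X_Sᵀ)`, expressed via the Rayleigh quotient
over unit vectors. -/
noncomputable def thetaMax (n p : ℕ) (x : Fin p → Fin n → ℝ) (s : ℕ) : ℝ :=
  sSup {r : ℝ | ∃ S : Finset (Fin p), S.card = s ∧ ∃ u : Fin n → ℝ,
    (∑ j, u j ^ 2) = 1 ∧ r = u ⬝ᵥ ((∑ i ∈ S, vecMulVec (x i) (x i)) *ᵥ u)}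

/-- `θ̲ = min_{|T| ≥ p−k+1} σ_min(X_T X_Tᵀ)`, expressed via the Rayleigh
quotient over unit vectors. -/
noncomputable def thetaLow (n p k : ℕ) (x : Fin p → Fin n → ℝ) : ℝ :=
  sInf {r : ℝ | ∃ T : Finset (Fin p), p - k + 1 ≤ T.card ∧ ∃ u : Fin n → ℝ,
    (∑ j, u j ^ 2) = 1 ∧ r = u ⬝ᵥ ((∑ i ∈ T, vecMulVec (x i) (x i)) *ᵥ u)}

/-- The optimal value `v* = min {λ yᵀ A_S⁻¹ y : |S| ≤ k}` of sparse ridge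
regression. -/
noncomputable def vStar (n p k : ℕ) (lam : ℝ) (x : Fin p → Fin n → ℝ)
    (y : Fin n → ℝ) : ℝ :=
  sInf {v : ℝ | ∃ S : Finset (Fin p), S.card ≤ k ∧
    v = lam * (y ⬝ᵥ ((ridgeMat n p lam x S)⁻¹ *ᵥ y))}

namespace Matrix

variable {m : Type*} [Fintype m]

lemma dotProduct_self_nonneg {R : Type*} [Ring R] [LinearOrder R] [IsStrictOrderedRing R]
    (v : m → R) : 0 ≤ v ⬝ᵥ v :=
  Finset.sum_nonneg fun i _ => mul_self_nonneg (v i)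

lemma dotProduct_sum_vecMulVec_mulVec {R ι : Type*} [CommSemiring R] (s : Finset ι)
    (x : ι → m → R) (u : m → R) :
    u ⬝ᵥ ((∑ i ∈ s, vecMulVec (x i) (x i)) *ᵥ u) = ∑ i ∈ s, (x i ⬝ᵥ u) ^ 2 := by
  rw [sum_mulVec, dotProduct_sum]
  refine Finset.sum_congr rfl fun i _ => ?_
  rw [vecMulVec_mulVec, op_smul_eq_smul, dotProduct_smul, smul_eq_mul, dotProduct_comm, sq]

lemma exists_unit_sum_sq_dotProduct_eq {ι : Type*} (s : Finset ι) (x : ι → m → ℝ)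
    {u : m → ℝ} (hu : u ≠ 0) :
    ∃ v : m → ℝ, ∑ j, v j ^ 2 = 1 ∧
      ∑ i ∈ s, (x i ⬝ᵥ u) ^ 2 = (u ⬝ᵥ u) * v ⬝ᵥ ((∑ i ∈ s, vecMulVec (x i) (x i)) *ᵥ v) := by
  have hpos : 0 < u ⬝ᵥ u := by simpa using dotProduct_star_self_pos_iff.mpr hu
  refine ⟨(√(u ⬝ᵥ u))⁻¹ • u, ?_, ?_⟩
  · simp only [Pi.smul_apply, smul_eq_mul, mul_pow, ← Finset.mul_sum, inv_pow,
      Real.sq_sqrt hpos.le]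
    rw [← hpos.ne'.isUnit.inv_mul_cancel]
    simp [dotProduct, sq]
  · simp only [dotProduct_sum_vecMulVec_mulVec, dotProduct_smul, smul_eq_mul, mul_pow,
      ← Finset.mul_sum, inv_pow, Real.sq_sqrt hpos.le]
    field_simp

variable {A : Matrix m m ℝ}

lemma IsHermitian.dotProduct_mulVec_comm (hA : A.IsHermitian) (u v : m → ℝ) :
    u ⬝ᵥ (A *ᵥ v) = v ⬝ᵥ (A *ᵥ u) := by
  rw [dotProduct_mulVec, ← mulVec_transpose, ← conjTranspose_eq_transpose_of_trivial, hA.eq,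
    dotProduct_comm]

lemma PosDef.dotProduct_mulVec_self_nonneg (hA : A.PosDef) (u : m → ℝ) :
    0 ≤ u ⬝ᵥ (A *ᵥ u) := by
  simpa using hA.posSemidef.dotProduct_mulVec_nonneg u

variable [DecidableEq m]

lemma PosDef.mulVec_inv_mulVec (hA : A.PosDef) (u : m → ℝ) : A *ᵥ (A⁻¹ *ᵥ u) = u := by
  rw [mulVec_mulVec, mul_nonsing_inv _ (A.isUnit_iff_isUnit_det.mp hA.isUnit), one_mulVec]

/-- Sherman–Morrison, evaluated on the quadratic form of `y`. -/
lemma PosDef.dotProduct_inv_add_vecMulVec_mulVec (hA : A.PosDef) (z y : m → ℝ) :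
    y ⬝ᵥ ((A + vecMulVec z z)⁻¹ *ᵥ y) =
      y ⬝ᵥ (A⁻¹ *ᵥ y) - (y ⬝ᵥ (A⁻¹ *ᵥ z)) ^ 2 / (1 + z ⬝ᵥ (A⁻¹ *ᵥ z)) := by
  have hB : (A + vecMulVec z z).PosDef := by
    simpa using hA.add_posSemidef (posSemidef_vecMulVec_self_star z)
  have hc : 0 < 1 + z ⬝ᵥ (A⁻¹ *ᵥ z) := by linarith [hA.inv.dotProduct_mulVec_self_nonneg z]
  set s := (y ⬝ᵥ (A⁻¹ *ᵥ z)) / (1 + z ⬝ᵥ (A⁻¹ *ᵥ z)) with hs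
  have hcoef : z ⬝ᵥ (A⁻¹ *ᵥ y - s • A⁻¹ *ᵥ z) = s := by
    rw [dotProduct_sub, dotProduct_smul, smul_eq_mul,
      hA.inv.isHermitian.dotProduct_mulVec_comm z y, hs]
    field_simp
    ring
  have hsol : (A + vecMulVec z z)⁻¹ *ᵥ y = A⁻¹ *ᵥ y - s • A⁻¹ *ᵥ z := by
    have := hB.isUnit.invertible
    refine inv_mulVec_eq_vec ?_
    rw [add_mulVec, mulVec_sub, mulVec_smul, hA.mulVec_inv_mulVec, hA.mulVec_inv_mulVec,
      vecMulVec_mulVec, op_smul_eq_smul, hcoef, sub_add_cancel]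
  rw [hsol, dotProduct_sub, dotProduct_smul, smul_eq_mul, hs]
  field_simp

lemma PosDef.mul_dotProduct_inv_mulVec_le (hA : A.PosDef) {c : ℝ} (hc : 0 ≤ c)
    (h : ∀ u, c * (u ⬝ᵥ u) ≤ u ⬝ᵥ (A *ᵥ u)) (u : m → ℝ) :
    c * (u ⬝ᵥ (A⁻¹ *ᵥ u)) ≤ u ⬝ᵥ u := by
  set w := A⁻¹ *ᵥ u
  have huw : u ⬝ᵥ w = w ⬝ᵥ (A *ᵥ w) := by rw [hA.mulVec_inv_mulVec, dotProduct_comm]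
  have hsq := dotProduct_self_nonneg (u - c • w)
  simp only [dotProduct_sub, sub_dotProduct, dotProduct_smul, smul_dotProduct, smul_eq_mul,
    dotProduct_comm w u] at hsq
  nlinarith [h w]

lemma PosDef.dotProduct_le_mul_dotProduct_inv_mulVec (hA : A.PosDef) {C : ℝ} (hC : 0 < C)
    (h : ∀ u, u ⬝ᵥ (A *ᵥ u) ≤ C * (u ⬝ᵥ u)) (u : m → ℝ) :
    u ⬝ᵥ u ≤ C * (u ⬝ᵥ (A⁻¹ *ᵥ u)) := by
  set w := A⁻¹ *ᵥ u
  have hAw : A *ᵥ w = u := hA.mulVec_inv_mulVec u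
  have hwAu : w ⬝ᵥ (A *ᵥ u) = u ⬝ᵥ u := by
    rw [hA.isHermitian.dotProduct_mulVec_comm, hAw]
  have hpos := hA.dotProduct_mulVec_self_nonneg (w - C⁻¹ • u)
  simp only [mulVec_sub, mulVec_smul, dotProduct_sub, sub_dotProduct, dotProduct_smul,
    smul_dotProduct, smul_eq_mul, hAw, hwAu, dotProduct_comm w u] at hpos
  have hCu := h u
  field_simp at hpos ⊢
  nlinarith

end Matrix

lemma le_sub_mul_log_of_forall_le_sub {f : ℕ → ℝ} {c : ℝ} (hc : 0 ≤ c) {p k : ℕ} (hkp : k ≤ p)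
    (h : ∀ t < k, f (t + 1) ≤ f t - c / ((p : ℝ) - t)) :
    f k ≤ f 0 - c * Real.log (((p : ℝ) + 1) / ((p : ℝ) + 1 - k)) := by
  induction k with
  | zero => simp
  | succ k ih =>
    have hpk : 0 < (p : ℝ) - k := by
      have : (k : ℝ) + 1 ≤ p := by exact_mod_cast hkp
      linarith
    have hlog : Real.log (((p : ℝ) + 1) / ((p : ℝ) + 1 - (k + 1 : ℕ))) ≤
        Real.log (((p : ℝ) + 1) / ((p : ℝ) + 1 - k)) + ((p : ℝ) - k)⁻¹ := by
      have hsplit : ((p : ℝ) + 1) / ((p : ℝ) + 1 - (k + 1 : ℕ)) =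
          ((p : ℝ) + 1) / ((p : ℝ) + 1 - k) * (((p : ℝ) - k + 1) / ((p : ℝ) - k)) := by
        rw [Nat.cast_succ, show (p : ℝ) + 1 - (k + 1) = p - k by ring,
          show (p : ℝ) + 1 - k = p - k + 1 by ring]
        field_simp
      rw [hsplit, Real.log_mul (div_pos (by linarith) (by linarith)).ne'
        (div_pos (by linarith) hpk).ne']
      gcongr
      calc Real.log (((p : ℝ) - k + 1) / ((p : ℝ) - k))
          ≤ ((p : ℝ) - k + 1) / ((p : ℝ) - k) - 1 :=
            Real.log_le_sub_one_of_pos (div_pos (by linarith) hpk)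
        _ = ((p : ℝ) - k)⁻¹ := by field_simp; ring
    have := h k (by omega)
    linarith [ih (by omega) fun t ht => h t (by omega), mul_le_mul_of_nonneg_left hlog hc,
      show c / ((p : ℝ) - k) = c * ((p : ℝ) - k)⁻¹ from div_eq_mul_inv _ _]

section Theta

variable {n p : ℕ} {x : Fin p → Fin n → ℝ}

lemma le_thetaMax {s : ℕ} {S : Finset (Fin p)} (hS : S.card = s) {v : Fin n → ℝ}
    (hv : ∑ j, v j ^ 2 = 1) :
    v ⬝ᵥ ((∑ i ∈ S, vecMulVec (x i) (x i)) *ᵥ v) ≤ thetaMax n p x s := by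
  refine le_csSup ⟨∑ i, x i ⬝ᵥ x i, ?_⟩ ⟨S, hS, v, hv, rfl⟩
  rintro _ ⟨S, -, v, hv, rfl⟩
  rw [dotProduct_sum_vecMulVec_mulVec]
  refine (sum_le_sum fun i _ => ?_).trans
    (sum_le_sum_of_subset_of_nonneg (subset_univ S) fun i _ _ => dotProduct_self_nonneg (x i))
  have hcs := sum_mul_sq_le_sq_mul_sq univ (x i) v
  rw [hv, mul_one] at hcs
  simpa [dotProduct, sq] using hcs

lemma thetaLow_le {k : ℕ} {T : Finset (Fin p)} (hT : p - k + 1 ≤ T.card) {v : Fin n → ℝ}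
    (hv : ∑ j, v j ^ 2 = 1) :
    thetaLow n p k x ≤ v ⬝ᵥ ((∑ i ∈ T, vecMulVec (x i) (x i)) *ᵥ v) := by
  refine csInf_le ⟨0, ?_⟩ ⟨T, hT, v, hv, rfl⟩
  rintro _ ⟨T, -, v, -, rfl⟩
  rw [dotProduct_sum_vecMulVec_mulVec]
  positivity

lemma thetaMax_nonneg (s : ℕ) : 0 ≤ thetaMax n p x s := by
  refine Real.sSup_nonneg ?_
  rintro _ ⟨S, -, v, -, rfl⟩
  rw [dotProduct_sum_vecMulVec_mulVec]
  positivity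

lemma thetaLow_nonneg (k : ℕ) : 0 ≤ thetaLow n p k x := by
  refine Real.sInf_nonneg ?_
  rintro _ ⟨T, -, v, -, rfl⟩
  rw [dotProduct_sum_vecMulVec_mulVec]
  positivity

lemma sum_sq_dotProduct_le_thetaMax {s : ℕ} {S : Finset (Fin p)} (hS : S.card = s)
    (u : Fin n → ℝ) : ∑ i ∈ S, (x i ⬝ᵥ u) ^ 2 ≤ thetaMax n p x s * (u ⬝ᵥ u) := by
  obtain rfl | hu := eq_or_ne u 0
  · simp
  obtain ⟨v, hv, heq⟩ := exists_unit_sum_sq_dotProduct_eq S x hu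
  rw [heq, mul_comm _ (u ⬝ᵥ u)]
  exact mul_le_mul_of_nonneg_left (le_thetaMax hS hv) (dotProduct_self_nonneg u)

lemma sum_sq_dotProduct_le_thetaMax_of_card_le {s : ℕ} (hs : s ≤ p) {S : Finset (Fin p)}
    (hS : S.card ≤ s) (u : Fin n → ℝ) :
    ∑ i ∈ S, (x i ⬝ᵥ u) ^ 2 ≤ thetaMax n p x s * (u ⬝ᵥ u) := by
  obtain ⟨S', hSS', -, hS'⟩ :=
    exists_subsuperset_card_eq (subset_univ S) hS (by simpa using hs)
  exact (sum_le_sum_of_subset_of_nonneg hSS' fun i _ _ => sq_nonneg _).trans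
    (sum_sq_dotProduct_le_thetaMax hS' u)

lemma thetaLow_mul_le_sum_sq_dotProduct {k : ℕ} {T : Finset (Fin p)} (hT : p - k + 1 ≤ T.card)
    (u : Fin n → ℝ) : thetaLow n p k x * (u ⬝ᵥ u) ≤ ∑ i ∈ T, (x i ⬝ᵥ u) ^ 2 := by
  obtain rfl | hu := eq_or_ne u 0
  · simp
  obtain ⟨v, hv, heq⟩ := exists_unit_sum_sq_dotProduct_eq T x hu
  rw [heq, mul_comm _ (u ⬝ᵥ u)]
  exact mul_le_mul_of_nonneg_left (thetaLow_le hT hv) (dotProduct_self_nonneg u)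

lemma dotProduct_self_le_thetaMax_one (j : Fin p) : x j ⬝ᵥ x j ≤ thetaMax n p x 1 := by
  have h := sum_sq_dotProduct_le_thetaMax (x := x) (card_singleton j) (x j)
  rw [sum_singleton, sq] at h
  obtain h0 | h0 := (dotProduct_self_nonneg (x j)).eq_or_lt
  · rw [← h0]
    exact thetaMax_nonneg 1
  · exact le_of_mul_le_mul_right h h0

end Theta

section Ridge

variable {n p : ℕ} {lam : ℝ} {x : Fin p → Fin n → ℝ}

lemma dotProduct_ridgeMat_mulVec (S : Finset (Fin p)) (u : Fin n → ℝ) :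
    u ⬝ᵥ (ridgeMat n p lam x S *ᵥ u) = (n : ℝ) * lam * (u ⬝ᵥ u) + ∑ i ∈ S, (x i ⬝ᵥ u) ^ 2 := by
  rw [ridgeMat, add_mulVec, dotProduct_add, smul_mulVec, one_mulVec, dotProduct_smul,
    smul_eq_mul, dotProduct_sum_vecMulVec_mulVec]

lemma ridgeMat_posDef (hn : 0 < n) (hlam : 0 < lam) (S : Finset (Fin p)) :
    (ridgeMat n p lam x S).PosDef :=
  (PosDef.one.smul (by positivity)).add_posSemidef
    (posSemidef_sum S fun i _ => by simpa using posSemidef_vecMulVec_self_star (x i))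

lemma ridgeMat_insert {S : Finset (Fin p)} {j : Fin p} (hj : j ∉ S) :
    ridgeMat n p lam x (insert j S) = ridgeMat n p lam x S + vecMulVec (x j) (x j) := by
  rw [ridgeMat, ridgeMat, sum_insert hj, add_comm (vecMulVec _ _), add_assoc]

lemma mul_dotProduct_self_le_dotProduct_ridgeMat_mulVec (S : Finset (Fin p)) (u : Fin n → ℝ) :
    (n : ℝ) * lam * (u ⬝ᵥ u) ≤ u ⬝ᵥ (ridgeMat n p lam x S *ᵥ u) := by
  rw [dotProduct_ridgeMat_mulVec]
  exact le_add_of_nonneg_right (by positivity)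

lemma dotProduct_ridgeMat_mulVec_le {k : ℕ} (hkp : k ≤ p) {S : Finset (Fin p)}
    (hS : S.card ≤ k) (u : Fin n → ℝ) :
    u ⬝ᵥ (ridgeMat n p lam x S *ᵥ u) ≤ ((n : ℝ) * lam + thetaMax n p x k) * (u ⬝ᵥ u) := by
  rw [dotProduct_ridgeMat_mulVec]
  linarith [sum_sq_dotProduct_le_thetaMax_of_card_le (x := x) hkp hS u]

end Ridge

noncomputable def ridgeObjective (n p : ℕ) (lam : ℝ) (x : Fin p → Fin n → ℝ) (y : Fin n → ℝ)
    (S : Finset (Fin p)) : ℝ :=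
  lam * (y ⬝ᵥ ((ridgeMat n p lam x S)⁻¹ *ᵥ y))

noncomputable def ridgeGain (n p : ℕ) (lam : ℝ) (x : Fin p → Fin n → ℝ) (y : Fin n → ℝ)
    (S : Finset (Fin p)) (j : Fin p) : ℝ :=
  lam * (y ⬝ᵥ ((ridgeMat n p lam x S)⁻¹ *ᵥ x j)) ^ 2 /
    (1 + x j ⬝ᵥ ((ridgeMat n p lam x S)⁻¹ *ᵥ x j))

section Greedy

variable {n p : ℕ} {lam : ℝ} {x : Fin p → Fin n → ℝ} {y : Fin n → ℝ}

lemma ridgeObjective_nonneg (hn : 0 < n) (hlam : 0 < lam) (S : Finset (Fin p)) :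
    0 ≤ ridgeObjective n p lam x y S :=
  mul_nonneg hlam.le ((ridgeMat_posDef hn hlam S).inv.dotProduct_mulVec_self_nonneg y)

lemma ridgeObjective_insert (hn : 0 < n) (hlam : 0 < lam) {S : Finset (Fin p)} {j : Fin p}
    (hj : j ∉ S) :
    ridgeObjective n p lam x y (insert j S) =
      ridgeObjective n p lam x y S - ridgeGain n p lam x y S j := by
  rw [ridgeObjective, ridgeObjective, ridgeGain, ridgeMat_insert hj,
    (ridgeMat_posDef hn hlam S).dotProduct_inv_add_vecMulVec_mulVec]
  ring

lemma mul_sq_le_ridgeGain (hn : 0 < n) (hlam : 0 < lam) (S : Finset (Fin p)) (j : Fin p) :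
    (n : ℝ) * lam * (lam * (y ⬝ᵥ ((ridgeMat n p lam x S)⁻¹ *ᵥ x j)) ^ 2) ≤
      ((n : ℝ) * lam + thetaMax n p x 1) * ridgeGain n p lam x y S j := by
  have hA := ridgeMat_posDef (x := x) hn hlam S
  have hr : (n : ℝ) * lam * (x j ⬝ᵥ ((ridgeMat n p lam x S)⁻¹ *ᵥ x j)) ≤ thetaMax n p x 1 :=
    (hA.mul_dotProduct_inv_mulVec_le (by positivity)
      (mul_dotProduct_self_le_dotProduct_ridgeMat_mulVec S) (x j)).trans
      (dotProduct_self_le_thetaMax_one j)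
  have hr0 := hA.inv.dotProduct_mulVec_self_nonneg (x j)
  rw [ridgeGain, mul_div_assoc', le_div_iff₀ (by linarith)]
  have hq : 0 ≤ lam * (y ⬝ᵥ ((ridgeMat n p lam x S)⁻¹ *ᵥ x j)) ^ 2 := by positivity
  nlinarith [mul_le_mul_of_nonneg_left hr hq]

lemma thetaLow_mul_ridgeObjective_le (hn : 0 < n) (hlam : 0 < lam) {k : ℕ} (hkp : k ≤ p)
    {S T : Finset (Fin p)} (hS : S.card ≤ k) (hT : p - k + 1 ≤ T.card) :
    thetaLow n p k x * ridgeObjective n p lam x y S ≤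
      ((n : ℝ) * lam + thetaMax n p x k) *
        ∑ j ∈ T, lam * (y ⬝ᵥ ((ridgeMat n p lam x S)⁻¹ *ᵥ x j)) ^ 2 := by
  have hA := ridgeMat_posDef (x := x) hn hlam S
  set w := (ridgeMat n p lam x S)⁻¹ *ᵥ y
  have hsymm (j : Fin p) : y ⬝ᵥ ((ridgeMat n p lam x S)⁻¹ *ᵥ x j) = x j ⬝ᵥ w :=
    hA.inv.isHermitian.dotProduct_mulVec_comm y (x j)
  have hyw : y ⬝ᵥ w ≤ ((n : ℝ) * lam + thetaMax n p x k) * (w ⬝ᵥ w) := by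
    have := dotProduct_ridgeMat_mulVec_le (lam := lam) (x := x) hkp hS w
    rwa [hA.mulVec_inv_mulVec, dotProduct_comm] at this
  have := thetaMax_nonneg (x := x) k
  have := thetaLow_nonneg (x := x) k
  simp only [hsymm, ← mul_sum]
  calc thetaLow n p k x * (lam * (y ⬝ᵥ w))
      ≤ thetaLow n p k x * (lam * (((n : ℝ) * lam + thetaMax n p x k) * (w ⬝ᵥ w))) := by
        gcongr
    _ = ((n : ℝ) * lam + thetaMax n p x k) * (lam * (thetaLow n p k x * (w ⬝ᵥ w))) := by ring
    _ ≤ ((n : ℝ) * lam + thetaMax n p x k) * (lam * ∑ j ∈ T, (x j ⬝ᵥ w) ^ 2) := by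
        gcongr
        exact thetaLow_mul_le_sum_sq_dotProduct hT w

lemma mul_ridgeObjective_le_sum_ridgeGain (hn : 0 < n) (hlam : 0 < lam) {k : ℕ} (hkp : k ≤ p)
    {S T : Finset (Fin p)} (hS : S.card ≤ k) (hT : p - k + 1 ≤ T.card) :
    (n : ℝ) * lam * thetaLow n p k x * ridgeObjective n p lam x y S ≤
      ((n : ℝ) * lam + thetaMax n p x 1) * ((n : ℝ) * lam + thetaMax n p x k) *
        ∑ j ∈ T, ridgeGain n p lam x y S j := by
  have := thetaMax_nonneg (x := x) k
  calc (n : ℝ) * lam * thetaLow n p k x * ridgeObjective n p lam x y S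
      ≤ (n : ℝ) * lam * (((n : ℝ) * lam + thetaMax n p x k) *
          ∑ j ∈ T, lam * (y ⬝ᵥ ((ridgeMat n p lam x S)⁻¹ *ᵥ x j)) ^ 2) := by
        rw [mul_assoc]
        exact mul_le_mul_of_nonneg_left (thetaLow_mul_ridgeObjective_le hn hlam hkp hS hT)
          (by positivity)
    _ = ((n : ℝ) * lam + thetaMax n p x k) *
          ∑ j ∈ T, (n : ℝ) * lam * (lam * (y ⬝ᵥ ((ridgeMat n p lam x S)⁻¹ *ᵥ x j)) ^ 2) := by
        simp only [mul_sum]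
        exact sum_congr rfl fun _ _ => by ring
    _ ≤ ((n : ℝ) * lam + thetaMax n p x k) *
          ∑ j ∈ T, ((n : ℝ) * lam + thetaMax n p x 1) * ridgeGain n p lam x y S j := by
        exact mul_le_mul_of_nonneg_left
          (sum_le_sum fun j _ => mul_sq_le_ridgeGain hn hlam S j) (by positivity)
    _ = _ := by
        rw [← mul_sum]
        ring

lemma vStar_le_ridgeObjective (hn : 0 < n) (hlam : 0 < lam) {k : ℕ} {S : Finset (Fin p)}
    (hS : S.card ≤ k) : vStar n p k lam x y ≤ ridgeObjective n p lam x y S := by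
  refine csInf_le ⟨0, ?_⟩ ⟨S, hS, rfl⟩
  rintro _ ⟨S, -, rfl⟩
  exact ridgeObjective_nonneg hn hlam S

lemma vStar_nonneg (hn : 0 < n) (hlam : 0 < lam) (k : ℕ) : 0 ≤ vStar n p k lam x y := by
  refine Real.sInf_nonneg ?_
  rintro _ ⟨S, -, rfl⟩
  exact ridgeObjective_nonneg hn hlam S

lemma ridgeObjective_empty_le_mul_vStar (hn : 0 < n) (hlam : 0 < lam) {k : ℕ} (hkp : k ≤ p) :
    ridgeObjective n p lam x y ∅ ≤
      ((n : ℝ) * lam + thetaMax n p x k) / ((n : ℝ) * lam) * vStar n p k lam x y := by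
  have hν : 0 < (n : ℝ) * lam := by positivity
  have hC : 0 < (n : ℝ) * lam + thetaMax n p x k := by
    have := thetaMax_nonneg (x := x) k
    positivity
  have hempty : (n : ℝ) * lam * ridgeObjective n p lam x y ∅ ≤ lam * (y ⬝ᵥ y) := by
    rw [ridgeObjective, mul_left_comm]
    gcongr
    exact (ridgeMat_posDef hn hlam ∅).mul_dotProduct_inv_mulVec_le hν.le
      (mul_dotProduct_self_le_dotProduct_ridgeMat_mulVec ∅) y
  rw [div_mul_eq_mul_div, le_div_iff₀' hν]
  refine hempty.trans ((div_le_iff₀' hC).mp (le_csInf ⟨_, ∅, by simp, rfl⟩ ?_))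
  rintro _ ⟨S, hS, rfl⟩
  rw [div_le_iff₀' hC, mul_left_comm]
  gcongr
  exact (ridgeMat_posDef hn hlam S).dotProduct_le_mul_dotProduct_inv_mulVec hC
    (dotProduct_ridgeMat_mulVec_le hkp hS) y

lemma ridgeObjective_insert_le_of_forall_ridgeGain_le (hn : 0 < n) (hlam : 0 < lam) {k : ℕ}
    (hkp : k ≤ p) {S : Finset (Fin p)} (hSk : S.card < k) {j : Fin p} (hj : j ∉ S)
    (hmax : ∀ j' ∉ S, ridgeGain n p lam x y S j' ≤ ridgeGain n p lam x y S j) :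
    ridgeObjective n p lam x y (insert j S) ≤ ridgeObjective n p lam x y S -
      (n : ℝ) * lam * thetaLow n p k x * vStar n p k lam x y /
        (((n : ℝ) * lam + thetaMax n p x 1) * ((n : ℝ) * lam + thetaMax n p x k)) /
        ((p : ℝ) - S.card) := by
  have hT : p - k + 1 ≤ Sᶜ.card := by
    rw [card_compl, Fintype.card_fin]
    omega
  have hcompl : (Sᶜ.card : ℝ) = p - S.card := by
    rw [card_compl, Fintype.card_fin, Nat.cast_sub (by simpa using card_le_univ S)]
  have hp : 0 < (p : ℝ) - S.card := by
    rw [← hcompl]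
    exact_mod_cast card_pos.mpr ⟨j, mem_compl.mpr hj⟩
  have havg : ∑ j' ∈ Sᶜ, ridgeGain n p lam x y S j' ≤
      ((p : ℝ) - S.card) * ridgeGain n p lam x y S j := by
    rw [← hcompl, ← nsmul_eq_mul]
    exact sum_le_card_nsmul _ _ _ fun j' hj' => hmax j' (mem_compl.mp hj')
  have := thetaMax_nonneg (x := x) 1
  have := thetaMax_nonneg (x := x) k
  have := thetaLow_nonneg (x := x) k
  rw [ridgeObjective_insert hn hlam hj, sub_le_sub_iff_left, div_div, div_le_iff₀ (by positivity)]
  calc (n : ℝ) * lam * thetaLow n p k x * vStar n p k lam x y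
      ≤ (n : ℝ) * lam * thetaLow n p k x * ridgeObjective n p lam x y S := by
        gcongr
        exact vStar_le_ridgeObjective hn hlam hSk.le
    _ ≤ ((n : ℝ) * lam + thetaMax n p x 1) * ((n : ℝ) * lam + thetaMax n p x k) *
          ∑ j' ∈ Sᶜ, ridgeGain n p lam x y S j' :=
        mul_ridgeObjective_le_sum_ridgeGain hn hlam hkp hSk.le hT
    _ ≤ ((n : ℝ) * lam + thetaMax n p x 1) * ((n : ℝ) * lam + thetaMax n p x k) *
          (((p : ℝ) - S.card) * ridgeGain n p lam x y S j) := by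
        gcongr
    _ = _ := by ring

end Greedy

lemma card_eq_of_forall_eq_insert {α : Type*} [DecidableEq α] {S : ℕ → Finset α} (h0 : S 0 = ∅)
    {k : ℕ} (h : ∀ t < k, ∃ j ∉ S t, S (t + 1) = insert j (S t)) {t : ℕ} (ht : t ≤ k) :
    (S t).card = t := by
  induction t with
  | zero => simp [h0]
  | succ t ih =>
    obtain ⟨j, hj, hins⟩ := h t ht
    rw [hins, card_insert_of_notMem hj, ih (by omega)]

theorem stmt14_general (n p k : ℕ) (hn : 1 ≤ n) (hkp : k ≤ p)
    (x : Fin p → Fin n → ℝ) (y : Fin n → ℝ) (lam : ℝ) (hlam : 0 < lam)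
    (S : ℕ → Finset (Fin p)) (hS0 : S 0 = ∅)
    (hstep : ∀ t < k, ∃ j ∉ S t, S (t + 1) = insert j (S t) ∧
      ∀ j' ∉ S t,
        -(lam * (y ⬝ᵥ ((ridgeMat n p lam x (S t))⁻¹ *ᵥ x j)) ^ 2 /
            (1 + x j ⬝ᵥ ((ridgeMat n p lam x (S t))⁻¹ *ᵥ x j))) ≤
        -(lam * (y ⬝ᵥ ((ridgeMat n p lam x (S t))⁻¹ *ᵥ x j')) ^ 2 /
            (1 + x j' ⬝ᵥ ((ridgeMat n p lam x (S t))⁻¹ *ᵥ x j'))))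
    (vG : ℝ) (hvG : vG = lam * (y ⬝ᵥ ((ridgeMat n p lam x (S k))⁻¹ *ᵥ y))) :
    vStar n p k lam x y ≤ vG ∧
      vG ≤ (((n : ℝ) * lam + thetaMax n p x k) / ((n : ℝ) * lam)) *
        (1 - ((n : ℝ) ^ 2 * lam ^ 2 * thetaLow n p k x) /
            (((n : ℝ) * lam + thetaMax n p x 1) *
              ((n : ℝ) * lam + thetaMax n p x k) ^ 2) *
          Real.log (((p : ℝ) + 1) / ((p : ℝ) + 1 - k))) *
        vStar n p k lam x y := by
  have hcard (t : ℕ) (ht : t ≤ k) : (S t).card = t :=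
    card_eq_of_forall_eq_insert hS0 (fun t ht => (hstep t ht).imp fun _ h => ⟨h.1, h.2.1⟩) ht
  have hdecr : ∀ t < k, ridgeObjective n p lam x y (S (t + 1)) ≤ ridgeObjective n p lam x y (S t) -
      (n : ℝ) * lam * thetaLow n p k x * vStar n p k lam x y /
        (((n : ℝ) * lam + thetaMax n p x 1) * ((n : ℝ) * lam + thetaMax n p x k)) /
        ((p : ℝ) - t) := by
    intro t ht
    obtain ⟨j, hj, hins, hmax⟩ := hstep t ht
    have h := ridgeObjective_insert_le_of_forall_ridgeGain_le hn hlam hkp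
      (by rwa [hcard t ht.le]) hj fun j' hj' => neg_le_neg_iff.mp (hmax j' hj')
    rwa [hcard t ht.le, ← hins] at h
  have := thetaMax_nonneg (x := x) 1
  have := thetaMax_nonneg (x := x) k
  have := thetaLow_nonneg (x := x) k
  have := vStar_nonneg (x := x) (y := y) hn hlam k
  have htel := le_sub_mul_log_of_forall_le_sub
    (f := fun t => ridgeObjective n p lam x y (S t)) (by positivity) hkp hdecr
  have hempty := ridgeObjective_empty_le_mul_vStar (x := x) (y := y) hn hlam hkp
  rw [← hS0] at hempty
  have hν : (n : ℝ) * lam ≠ 0 := by positivity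
  subst hvG
  refine ⟨vStar_le_ridgeObjective hn hlam (hcard k le_rfl).le,
    htel.trans ((sub_le_sub_right hempty _).trans_eq ?_)⟩
  field_simp

/-- Performance guarantee of the greedy forward-selection algorithm for sparse
ridge regression: `v* ≤ v^G ≤ ((nλ+θ_k)/(nλ))·(1 − (n²λ²θ̲)/((nλ+θ₁)(nλ+θ_k)²)
· log((p+1)/(p+1−k)))·v*`. -/
theorem stmt14 (n p k : ℕ) (hn : 1 ≤ n) (hk : 1 ≤ k) (hkp : k ≤ p)
    (x : Fin p → Fin n → ℝ) (y : Fin n → ℝ) (lam : ℝ) (hlam : 0 < lam)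
    (S : ℕ → Finset (Fin p)) (hS0 : S 0 = ∅)
    (hstep : ∀ t < k, ∃ j ∉ S t, S (t + 1) = insert j (S t) ∧
      ∀ j' ∉ S t,
        -(lam * (y ⬝ᵥ ((ridgeMat n p lam x (S t))⁻¹ *ᵥ x j)) ^ 2 /
            (1 + x j ⬝ᵥ ((ridgeMat n p lam x (S t))⁻¹ *ᵥ x j))) ≤
        -(lam * (y ⬝ᵥ ((ridgeMat n p lam x (S t))⁻¹ *ᵥ x j')) ^ 2 /
            (1 + x j' ⬝ᵥ ((ridgeMat n p lam x (S t))⁻¹ *ᵥ x j'))))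
    (vG : ℝ) (hvG : vG = lam * (y ⬝ᵥ ((ridgeMat n p lam x (S k))⁻¹ *ᵥ y))) :
    vStar n p k lam x y ≤ vG ∧
      vG ≤ (((n : ℝ) * lam + thetaMax n p x k) / ((n : ℝ) * lam)) *
        (1 - ((n : ℝ) ^ 2 * lam ^ 2 * thetaLow n p k x) /
            (((n : ℝ) * lam + thetaMax n p x 1) *
              ((n : ℝ) * lam + thetaMax n p x k) ^ 2) *
          Real.log (((p : ℝ) + 1) / ((p : ℝ) + 1 - k))) *
        vStar n p k lam x y :=
  stmt14_general n p k hn hkp x y lam hlam S hS0 hstep vG hvG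
end
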